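/- arXiv:1510.02383 — 7 statements merged into one kernel-verified Lean document; each statement's English description precedes it below -/
import Mathlib

section
/- Let ω : G → X and τ : Ĝ → Y be weights on a finite abelian group G and its character group, with (ω, τ) a compatible pair, and let n ≥ 1 be an integer. Then the pair of product weights (ω^n, τ^n) on G^n and Ĝ^n is compatible, and for all a = (a₁,…,a_n) ∈ X^n and b = (b₁,…,b_n) ∈ Y^n the Krawtchouk coefficients satisfy K(ω^n, τ^n)(a, b) = Π_{j=1}^n K(ω, τ)(a_j, b_j). -/
/-!
Both claims reduce to one identity: the indicator of the fibre `τ^n = b` is the product of the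
indicators of the fibres `τ = b_j`, and a character of `G^n` is the product of its coordinates,
so the sum of `χ(g)` over that fibre factors as `∏_j ∑_{τ χ = b_j} χ(g_j)`. Each factor depends
only on `ω(g_j)` by compatibility of `(ω, τ)`.
-/

open scoped Classical

variable {G X Y : Type*}

/-- The pair of weights `(ω, τ)` on a finite abelian group `G` and its character
group `Ĝ = AddChar G ℂˣ` is *compatible*. -/
def Compatible [AddCommGroup G] [Fintype G] [Fintype (AddChar G ℂˣ)]
    (ω : G → X) (τ : AddChar G ℂˣ → Y) : Prop :=
  ∀ g₁ g₂ : G, ω g₁ = ω g₂ → ∀ b : Y,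
    ∑ χ : AddChar G ℂˣ, (if τ χ = b then ((χ g₁ : ℂˣ) : ℂ) else 0)
      = ∑ χ : AddChar G ℂˣ, (if τ χ = b then ((χ g₂ : ℂˣ) : ℂ) else 0)

/-- The Krawtchouk coefficient `K(ω,τ)(a,b)`. -/
noncomputable def kraw [AddCommGroup G] [Fintype G] [Fintype (AddChar G ℂˣ)]
    (ω : G → X) (τ : AddChar G ℂˣ → Y) (a : X) (b : Y) : ℂ :=
  if h : ∃ g : G, ω g = a then
    ∑ χ : AddChar G ℂˣ, (if τ χ = b then ((χ h.choose : ℂˣ) : ℂ) else 0)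
  else 0

/-- Compatibility of the pair of product weights `(ω^n, τ^n)` on `G^n` and on its
character group `Ĝ^n` (identified with `Fin n → AddChar G ℂˣ` acting by
`χ(g) = Π_j χ_j (g_j)`). -/
def CompatibleProd [AddCommGroup G] [Fintype G] [Fintype (AddChar G ℂˣ)]
    (n : ℕ) (ω : G → X) (τ : AddChar G ℂˣ → Y) : Prop :=
  ∀ g₁ g₂ : Fin n → G, (fun j => ω (g₁ j)) = (fun j => ω (g₂ j)) → ∀ b : Fin n → Y,
    ∑ χ : Fin n → AddChar G ℂˣ,
        (if (fun j => τ (χ j)) = b then (((∏ j, χ j (g₁ j) : ℂˣ)) : ℂ) else 0)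
      = ∑ χ : Fin n → AddChar G ℂˣ,
          (if (fun j => τ (χ j)) = b then (((∏ j, χ j (g₂ j) : ℂˣ)) : ℂ) else 0)

/-- The Krawtchouk coefficient `K(ω^n,τ^n)(a,b)` of the pair of product weights. -/
noncomputable def krawProd [AddCommGroup G] [Fintype G] [Fintype (AddChar G ℂˣ)]
    (n : ℕ) (ω : G → X) (τ : AddChar G ℂˣ → Y) (a : Fin n → X) (b : Fin n → Y) : ℂ :=
  if h : ∃ g : Fin n → G, (fun j => ω (g j)) = a then
    ∑ χ : Fin n → AddChar G ℂˣ,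
      (if (fun j => τ (χ j)) = b then (((∏ j, χ j (h.choose j) : ℂˣ)) : ℂ) else 0)
  else 0

theorem Fintype.sum_pi_ite_comp_eq_prod_sum {ι A Y R : Type*} [Fintype ι] [DecidableEq ι] [Fintype A]
    [CommSemiring R] (τ : A → Y) (b : ι → Y) (f : ι → A → R) :
    ∑ χ : ι → A, (if (fun j => τ (χ j)) = b then ∏ j, f j (χ j) else 0)
      = ∏ j, ∑ x, if τ x = b j then f j x else 0 := by
  simp only [Fintype.prod_sum, Fintype.prod_ite_zero, funext_iff]

noncomputable def charFiberSum [AddCommGroup G] [Fintype (AddChar G ℂˣ)]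
    (τ : AddChar G ℂˣ → Y) (b : Y) (g : G) : ℂ :=
  ∑ χ : AddChar G ℂˣ, if τ χ = b then ((χ g : ℂˣ) : ℂ) else 0

theorem sum_pi_ite_prod_char_eq_prod_charFiberSum [AddCommGroup G] [Fintype (AddChar G ℂˣ)]
    (τ : AddChar G ℂˣ → Y) (n : ℕ) (g : Fin n → G) (b : Fin n → Y) :
    ∑ χ : Fin n → AddChar G ℂˣ,
        (if (fun j => τ (χ j)) = b then (((∏ j, χ j (g j) : ℂˣ)) : ℂ) else 0)
      = ∏ j, charFiberSum τ (b j) (g j) := by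
  simp only [Units.coe_prod]
  exact Fintype.sum_pi_ite_comp_eq_prod_sum τ b fun j χ => ((χ (g j) : ℂˣ) : ℂ)

section Krawtchouk

variable [AddCommGroup G] [Fintype G] [Fintype (AddChar G ℂˣ)]
  {ω : G → X} {τ : AddChar G ℂˣ → Y}

theorem kraw_eq_charFiberSum (hcomp : Compatible ω τ) {g : G} {a : X} (hg : ω g = a) (b : Y) :
    kraw ω τ a b = charFiberSum τ b g := by
  have ha : ∃ g : G, ω g = a := ⟨g, hg⟩
  rw [kraw, dif_pos ha]
  exact hcomp _ _ (ha.choose_spec.trans hg.symm) b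

theorem kraw_eq_zero {a : X} (ha : ∀ g : G, ω g ≠ a) (b : Y) : kraw ω τ a b = 0 :=
  dif_neg fun ⟨g, hg⟩ => ha g hg

theorem Compatible.compatibleProd (hcomp : Compatible ω τ) (n : ℕ) : CompatibleProd n ω τ := by
  intro g₁ g₂ hg b
  rw [sum_pi_ite_prod_char_eq_prod_charFiberSum, sum_pi_ite_prod_char_eq_prod_charFiberSum]
  exact Finset.prod_congr rfl fun j _ => hcomp _ _ (congrFun hg j) (b j)

theorem krawProd_eq_prod_charFiberSum (hcomp : Compatible ω τ) {n : ℕ} {g : Fin n → G}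
    {a : Fin n → X} (hg : (fun j => ω (g j)) = a) (b : Fin n → Y) :
    krawProd n ω τ a b = ∏ j, charFiberSum τ (b j) (g j) := by
  have ha : ∃ g : Fin n → G, (fun j => ω (g j)) = a := ⟨g, hg⟩
  rw [krawProd, dif_pos ha, ← sum_pi_ite_prod_char_eq_prod_charFiberSum]
  exact hcomp.compatibleProd n _ _ (ha.choose_spec.trans hg.symm) b

theorem krawProd_eq_zero {n : ℕ} {a : Fin n → X} (ha : ∀ g : Fin n → G, (fun j => ω (g j)) ≠ a)
    (b : Fin n → Y) : krawProd n ω τ a b = 0 :=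
  dif_neg fun ⟨g, hg⟩ => ha g hg

end Krawtchouk

theorem stmt_1_general [AddCommGroup G] [Fintype G] [Fintype (AddChar G ℂˣ)]
    (ω : G → X) (τ : AddChar G ℂˣ → Y) (hcomp : Compatible ω τ)
    (n : ℕ) :
    CompatibleProd n ω τ ∧
      ∀ (a : Fin n → X) (b : Fin n → Y),
        krawProd n ω τ a b = ∏ j, kraw ω τ (a j) (b j) := by
  refine ⟨hcomp.compatibleProd n, fun a b => ?_⟩
  by_cases hrange : ∀ j, ∃ g : G, ω g = a j
  · choose g hg using hrange
    rw [krawProd_eq_prod_charFiberSum hcomp (funext hg)]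
    exact Finset.prod_congr rfl fun j _ => (kraw_eq_charFiberSum hcomp (hg j) (b j)).symm
  · push Not at hrange
    obtain ⟨j, hj⟩ := hrange
    rw [krawProd_eq_zero (fun g hg => hj (g j) (congrFun hg j)),
      Finset.prod_eq_zero (Finset.mem_univ j) (kraw_eq_zero hj (b j))]

/-- If `(ω, τ)` is compatible then the pair of product weights `(ω^n, τ^n)` is
compatible and `K(ω^n,τ^n)(a,b) = Π_{j} K(ω,τ)(a_j, b_j)`. -/
theorem stmt_1 [AddCommGroup G] [Fintype G] [Fintype (AddChar G ℂˣ)]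
    (ω : G → X) (τ : AddChar G ℂˣ → Y) (hcomp : Compatible ω τ)
    (n : ℕ) (hn : 1 ≤ n) :
    CompatibleProd n ω τ ∧
      ∀ (a : Fin n → X) (b : Fin n → Y),
        krawProd n ω τ a b = ∏ j, kraw ω τ (a j) (b j) :=
  stmt_1_general ω τ hcomp n
end

section
/- Let σ : G ⇢ L be a regular support. Then for every S ∈ L one has G_σ(S)* = Ĝ_{σ*}(S), i.e. a character χ ∈ Ĝ satisfies χ(g) = 1 for all g ∈ G_σ(S) if and only if S ≤ σ*(χ) in L. -/
open Finset
open scoped Classical Pointwise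

/-- A finite graded lattice of rank `r` (with rank function `ρ`) that is *regular*:
the counting numbers `μ_≤`, `μ_≥` and the Möbius numbers `μ_L` depend only on ranks. -/
structure RegularLattice (L : Type*) [Lattice L] [BoundedOrder L] [Fintype L] where
  /-- the rank of the lattice -/
  r : ℕ
  /-- the rank function -/
  ρ : L → ℕ
  ρ_bot : ρ ⊥ = 0
  ρ_top : ρ ⊤ = r
  ρ_covby : ∀ S T : L, S ⋖ T → ρ T = ρ S + 1
  /-- the Möbius function of the lattice -/
  mu : L → L → ℤ
  mu_self : ∀ S : L, mu S S = 1
  mu_sum : ∀ S T : L, S < T → mu S T = - ∑ U : L, (if S ≤ U ∧ U < T then mu S U else 0)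
  /-- `μ_≤ s t` : the number of elements of rank `s` below an element of rank `t` -/
  muLE : ℕ → ℕ → ℕ
  card_le : ∀ (s : ℕ) (T : L), Nat.card {S : L // ρ S = s ∧ S ≤ T} = muLE s (ρ T)
  /-- `μ_≥ s t` : the number of elements of rank `s` above an element of rank `t` -/
  muGE : ℕ → ℕ → ℕ
  card_ge : ∀ (s : ℕ) (T : L), Nat.card {S : L // ρ S = s ∧ T ≤ S} = muGE s (ρ T)
  /-- `μ_L s t` : the common value of the Möbius function on pairs of ranks `s ≤ t`,
  with the convention `μ_L s t = 0` for `s > t` -/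
  muN : ℕ → ℕ → ℤ
  mu_eq : ∀ S T : L, S ≤ T → mu S T = muN (ρ S) (ρ T)
  muN_zero : ∀ s t : ℕ, t < s → muN s t = 0

/-- A regular support `σ : G ⇢ L` on a finite abelian group `G` with values in a
regular lattice `L`, together with its cardinality invariant `γ`. -/
structure RegularSupport (L : Type*) [Lattice L] [BoundedOrder L] [Fintype L]
    (G : Type*) [AddCommGroup G] [Fintype G] (RL : RegularLattice L) where
  /-- the support function -/
  σ : G → L
  supp_zero : ∀ g : G, σ g = ⊥ ↔ g = 0
  supp_neg : ∀ g : G, σ (-g) = σ g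
  supp_add : ∀ g₁ g₂ : G, σ (g₁ + g₂) ≤ σ g₁ ⊔ σ g₂
  supp_sup : ∀ S₁ S₂ : L,
    {g : G | σ g ≤ S₁ ⊔ S₂} = {g : G | σ g ≤ S₁} + {g : G | σ g ≤ S₂}
  /-- `γ s` : the common cardinality of `G_σ(S)` over elements `S` of rank `s` -/
  γ : ℕ → ℕ
  card_supp : ∀ S : L, Nat.card {g : G // σ g ≤ S} = γ (RL.ρ S)

/-- The dual support `σ* : Ĝ → L`, `σ*(χ) = ⋁ {S ∈ L : χ ∈ G_σ(S)*}`. -/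
noncomputable def RegularSupport.dualSupp {L : Type*} [Lattice L] [BoundedOrder L] [Fintype L]
    {G : Type*} [AddCommGroup G] [Fintype G] {RL : RegularLattice L}
    (RS : RegularSupport L G RL) (χ : AddChar G ℂˣ) : L :=
  (Finset.univ.filter (fun S : L => ∀ g : G, RS.σ g ≤ S → χ g = 1)).sup id

/-!
The condition `χ ∈ G_σ(S)*` holds at `⊥` by (A), is inherited by smaller `S`, and by (D) is
closed under joins. Hence `σ*(χ)`, the join of all `S` satisfying it, satisfies it itself and is
the largest such `S`, so the condition holds exactly for `S ≤ σ*(χ)`.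
-/

namespace RegularSupport

variable {L : Type*} [Lattice L] [BoundedOrder L] [Fintype L]
  {G : Type*} [AddCommGroup G] [Fintype G] {RL : RegularLattice L}
  (RS : RegularSupport L G RL) {M : Type*} [Monoid M]

/-- `χ ∈ G_σ(S)*`. -/
def Annihilates (χ : AddChar G M) (S : L) : Prop :=
  ∀ g : G, RS.σ g ≤ S → χ g = 1

variable {RS}

theorem annihilates_bot (χ : AddChar G M) : RS.Annihilates χ ⊥ := by
  intro g hg
  rw [(RS.supp_zero g).mp (le_bot_iff.mp hg), AddChar.map_zero_eq_one]

theorem Annihilates.sup {χ : AddChar G M} {S₁ S₂ : L} (h₁ : RS.Annihilates χ S₁)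
    (h₂ : RS.Annihilates χ S₂) : RS.Annihilates χ (S₁ ⊔ S₂) := by
  intro g hg
  have hmem : g ∈ {g : G | RS.σ g ≤ S₁} + {g : G | RS.σ g ≤ S₂} := by
    rw [← RS.supp_sup]
    exact hg
  obtain ⟨a, ha, b, hb, rfl⟩ := hmem
  rw [AddChar.map_add_eq_mul, h₁ a ha, h₂ b hb, one_mul]

theorem Annihilates.mono {χ : AddChar G M} {S T : L} (hT : RS.Annihilates χ T) (hST : S ≤ T) :
    RS.Annihilates χ S :=
  fun g hg => hT g (hg.trans hST)

theorem le_dualSupp {χ : AddChar G ℂˣ} {S : L} (h : RS.Annihilates χ S) :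
    S ≤ RS.dualSupp χ :=
  Finset.le_sup (f := id) (Finset.mem_filter.mpr ⟨Finset.mem_univ S, h⟩)

theorem annihilates_dualSupp (χ : AddChar G ℂˣ) : RS.Annihilates χ (RS.dualSupp χ) :=
  Finset.sup_induction (annihilates_bot χ) (fun _ h₁ _ h₂ => h₁.sup h₂)
    fun _ hS => (Finset.mem_filter.mp hS).2

end RegularSupport

/-- For every `S ∈ L`, `G_σ(S)* = Ĝ_{σ*}(S)`: a character `χ` satisfies `χ(g) = 1`
for all `g ∈ G_σ(S)` if and only if `S ≤ σ*(χ)` in `L`. -/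
theorem stmt_3 {L : Type*} [Lattice L] [BoundedOrder L] [Fintype L]
    {G : Type*} [AddCommGroup G] [Fintype G] {RL : RegularLattice L}
    (RS : RegularSupport L G RL) (S : L) (χ : AddChar G ℂˣ) :
    (∀ g : G, RS.σ g ≤ S → χ g = 1) ↔ S ≤ RS.dualSupp χ :=
  ⟨RegularSupport.le_dualSupp, (RegularSupport.annihilates_dualSupp χ).mono⟩
end

section
/- Let σ : G ⇢ L be a regular support on a finite abelian group G with values in a regular lattice L of rank r. Then the dual support σ* : Ĝ → L is a regular support on the character group (Ĝ, ·) with values in the dual lattice L*; explicitly: (A) σ*(χ) = 1_L if and only if χ is the trivial character; (B) σ*(χ⁻¹) = σ*(χ) for all χ; (C) σ*(χ₁) ∧ σ*(χ₂) ≤ σ*(χ₁·χ₂) in L for all χ₁, χ₂ ∈ Ĝ; (D) Ĝ_{σ*}(S₁ ∧ S₂) = Ĝ_{σ*}(S₁) · Ĝ_{σ*}(S₂) for all S₁, S₂ ∈ L; (E) |Ĝ_{σ*}(S)| depends only on ρ(S). -/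
open Finset
open scoped Classical Pointwise

/-!
The elements `S` with `χ ∈ G_σ(S)*` are closed under joins by (D), so their join `σ*(χ)` is one
of them, and `Ĝ_{σ*}(S) = G_σ(S)*`. Duality of finite abelian groups makes `H ↦ H*` an
order-reversing bijection between the subgroups of `G` and of `Ĝ`, with `|H*| = [G : H]`. Hence
`G_σ(S₁ ⊓ S₂) = G_σ(S₁) ∩ G_σ(S₂)` turns into (D) for `σ*`, and `|Ĝ_{σ*}(S)| = |G| / γ(ρ(S))`.
-/

namespace AddChar

variable {G : Type*} [AddCommGroup G] [Finite G]

noncomputable def annihilatorOrderIso : AddSubgroup G ≃o (Subgroup (AddChar G ℂˣ))ᵒᵈ :=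
  AddSubgroup.toSubgroup.trans <|
    (CommGroup.subgroupOrderIsoSubgroupMonoidHom (Multiplicative G) ℂ).trans
      toMonoidHomMulEquiv.symm.mapSubgroup.dual

/-- The subgroup `H*` of characters trivial on `H`. -/
noncomputable def annihilator (H : AddSubgroup G) : Subgroup (AddChar G ℂˣ) :=
  OrderDual.ofDual (annihilatorOrderIso H)

lemma mem_annihilator {H : AddSubgroup G} {χ : AddChar G ℂˣ} :
    χ ∈ annihilator H ↔ ∀ g ∈ H, χ g = 1 := by
  simp [annihilator, annihilatorOrderIso, toMonoidHomMulEquiv, Equiv.symm_apply_eq]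

lemma annihilator_antitone : Antitone (annihilator (G := G)) :=
  fun _ _ h => annihilatorOrderIso.monotone h

lemma annihilator_sup (H₁ H₂ : AddSubgroup G) :
    annihilator (H₁ ⊔ H₂) = annihilator H₁ ⊓ annihilator H₂ :=
  annihilatorOrderIso.map_sup H₁ H₂

lemma annihilator_inf (H₁ H₂ : AddSubgroup G) :
    annihilator (H₁ ⊓ H₂) = annihilator H₁ ⊔ annihilator H₂ :=
  annihilatorOrderIso.map_inf H₁ H₂

lemma annihilator_bot : annihilator (⊥ : AddSubgroup G) = ⊤ :=
  annihilatorOrderIso.map_bot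

lemma annihilator_top : annihilator (⊤ : AddSubgroup G) = ⊥ :=
  annihilatorOrderIso.map_top

lemma card_annihilator (H : AddSubgroup G) : Nat.card (annihilator H) = H.index := by
  rw [← AddSubgroup.index_toSubgroup, Subgroup.index,
    ← CommGroup.card_subgroupOrderIsoSubgroupMonoidHom ℂ (AddSubgroup.toSubgroup H)]
  exact Subgroup.card_map_of_injective toMonoidHomMulEquiv.symm.injective

lemma coe_annihilator_inf (H₁ H₂ : AddSubgroup G) :
    (annihilator (H₁ ⊓ H₂) : Set (AddChar G ℂˣ)) = annihilator H₁ * annihilator H₂ := by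
  -- not found by instance search, which goes through a different `Mul` instance
  have : IsMulCommutative (AddChar G ℂˣ) := ⟨⟨fun a b => mul_comm a b⟩⟩
  rw [annihilator_inf, Subgroup.mul_normal]

end AddChar

namespace RegularSupport

variable {L : Type*} [Lattice L] [BoundedOrder L] [Fintype L]
  {G : Type*} [AddCommGroup G] [Fintype G] {RL : RegularLattice L} (RS : RegularSupport L G RL)

/-- The subgroup `G_σ(S)`. -/
def subgroup (S : L) : AddSubgroup G where
  carrier := {g | RS.σ g ≤ S}
  zero_mem' := by simp [(RS.supp_zero 0).2 rfl]
  add_mem' {a b} ha hb := (RS.supp_add a b).trans (sup_le ha hb)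
  neg_mem' {a} ha := (RS.supp_neg a).trans_le ha

@[simp]
lemma mem_subgroup {S : L} {g : G} : g ∈ RS.subgroup S ↔ RS.σ g ≤ S := Iff.rfl

lemma subgroup_mono : Monotone RS.subgroup :=
  fun _ _ h _ hg => le_trans hg h

lemma subgroup_bot : RS.subgroup ⊥ = ⊥ := by
  ext g
  simp [RS.supp_zero]

lemma subgroup_top : RS.subgroup ⊤ = ⊤ := by
  ext g
  simp

lemma subgroup_sup (S₁ S₂ : L) : RS.subgroup (S₁ ⊔ S₂) = RS.subgroup S₁ ⊔ RS.subgroup S₂ :=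
  SetLike.coe_injective <|
    (RS.supp_sup S₁ S₂).trans (AddSubgroup.add_normal (RS.subgroup S₁) (RS.subgroup S₂)).symm

lemma subgroup_inf (S₁ S₂ : L) : RS.subgroup (S₁ ⊓ S₂) = RS.subgroup S₁ ⊓ RS.subgroup S₂ := by
  ext g
  simp

lemma card_subgroup (S : L) : Nat.card (RS.subgroup S) = RS.γ (RL.ρ S) :=
  RS.card_supp S

open AddChar

lemma dualSupp_mem_annihilator (χ : AddChar G ℂˣ) :
    χ ∈ annihilator (RS.subgroup (RS.dualSupp χ)) := by
  refine sup_induction (p := fun T => χ ∈ annihilator (RS.subgroup T)) ?_ ?_ ?_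
  · rw [subgroup_bot, annihilator_bot]
    exact Subgroup.mem_top χ
  · intro S₁ h₁ S₂ h₂
    rw [subgroup_sup, annihilator_sup]
    exact Subgroup.mem_inf.2 ⟨h₁, h₂⟩
  · intro S hS
    exact mem_annihilator.2 fun g hg => (mem_filter.1 hS).2 g hg

lemma le_dualSupp_iff {χ : AddChar G ℂˣ} {S : L} :
    S ≤ RS.dualSupp χ ↔ χ ∈ annihilator (RS.subgroup S) :=
  ⟨fun h => annihilator_antitone (RS.subgroup_mono h) (RS.dualSupp_mem_annihilator χ),
    fun h => le_sup (f := id) (mem_filter.2 ⟨mem_univ S, mem_annihilator.1 h⟩)⟩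

lemma setOf_le_dualSupp (S : L) :
    {χ : AddChar G ℂˣ | S ≤ RS.dualSupp χ} = annihilator (RS.subgroup S) :=
  Set.ext fun _ => RS.le_dualSupp_iff

lemma card_subtype_le_dualSupp (S : L) :
    Nat.card {χ : AddChar G ℂˣ // S ≤ RS.dualSupp χ} = Nat.card G / RS.γ (RL.ρ S) := by
  rw [Nat.card_congr (Equiv.subtypeEquivRight fun _ => RS.le_dualSupp_iff), card_annihilator,
    ← RS.card_subgroup, ← AddSubgroup.index_mul_card, Nat.mul_div_cancel _ Nat.card_pos]

end RegularSupport

/-- The dual support `σ* : Ĝ → L*` is a regular support on the character group with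
values in the dual lattice `L*` (order reversed: `⊥_{L*} = ⊤_L`, joins become meets):
(A) `σ*(χ) = 1_L = ⊤` iff `χ` is trivial; (B) `σ*(χ⁻¹) = σ*(χ)`;
(C) `σ*(χ₁) ⊓ σ*(χ₂) ≤ σ*(χ₁·χ₂)` in `L`;
(D) `Ĝ_{σ*}(S₁ ⊓ S₂) = Ĝ_{σ*}(S₁) · Ĝ_{σ*}(S₂)`;
(E) `|Ĝ_{σ*}(S)|` only depends on `ρ(S)`. -/
theorem stmt_4 {L : Type*} [Lattice L] [BoundedOrder L] [Fintype L]
    {G : Type*} [AddCommGroup G] [Fintype G] {RL : RegularLattice L}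
    (RS : RegularSupport L G RL) :
    (∀ χ : AddChar G ℂˣ, RS.dualSupp χ = ⊤ ↔ χ = 1) ∧
    (∀ χ : AddChar G ℂˣ, RS.dualSupp χ⁻¹ = RS.dualSupp χ) ∧
    (∀ χ₁ χ₂ : AddChar G ℂˣ,
      RS.dualSupp χ₁ ⊓ RS.dualSupp χ₂ ≤ RS.dualSupp (χ₁ * χ₂)) ∧
    (∀ S₁ S₂ : L,
      {χ : AddChar G ℂˣ | S₁ ⊓ S₂ ≤ RS.dualSupp χ}
        = {χ : AddChar G ℂˣ | S₁ ≤ RS.dualSupp χ}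
            * {χ : AddChar G ℂˣ | S₂ ≤ RS.dualSupp χ}) ∧
    (∀ S T : L, RL.ρ S = RL.ρ T →
      Nat.card {χ : AddChar G ℂˣ // S ≤ RS.dualSupp χ}
        = Nat.card {χ : AddChar G ℂˣ // T ≤ RS.dualSupp χ}) := by
  open AddChar RegularSupport in
  refine ⟨fun χ => ?_, fun χ => ?_, fun χ₁ χ₂ => ?_, fun S₁ S₂ => ?_, fun S T h => ?_⟩
  · rw [← top_le_iff, RS.le_dualSupp_iff, subgroup_top, annihilator_top, Subgroup.mem_bot]
  · refine eq_of_forall_le_iff fun S => ?_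
    rw [RS.le_dualSupp_iff, RS.le_dualSupp_iff]
    exact Subgroup.inv_mem_iff _
  · exact RS.le_dualSupp_iff.2 <|
      mul_mem (RS.le_dualSupp_iff.1 inf_le_left) (RS.le_dualSupp_iff.1 inf_le_right)
  · rw [setOf_le_dualSupp, setOf_le_dualSupp, setOf_le_dualSupp, subgroup_inf,
      coe_annihilator_inf]
  · rw [card_subtype_le_dualSupp, card_subtype_le_dualSupp, h]
end

section
/- Let σ : G ⇢ L be a regular support on a finite abelian group G with values in a regular lattice L, and let C ⊆ G be a non-zero code with minimum weight d = min{ω_σ(g) : g ∈ C, g ≠ 0}. Then |C| ≤ |G| / γ_σ(d − 1). -/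
open Finset
open scoped Classical Pointwise

/-!
The elements of `G` supported below an element `S` of rank `d - 1` form a subgroup `G_σ(S)` of
order `γ_σ(d - 1)`. It meets `C` trivially, since a non-zero element of `C` has weight at least
`d`, so the addition map `C × G_σ(S) → G` is injective and `|C| · γ_σ(d - 1) ≤ |G|`.
-/

theorem AddSubgroup.card_mul_card_le_of_disjoint {G : Type*} [AddGroup G] [Finite G]
    {H K : AddSubgroup G} (h : Disjoint H K) : Nat.card H * Nat.card K ≤ Nat.card G :=
  Nat.card_prod H K ▸ Nat.card_le_card_of_injective _ (AddSubgroup.add_injective_of_disjoint h)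

namespace RegularLattice

variable {L : Type*} [Lattice L] [BoundedOrder L] [Fintype L] (RL : RegularLattice L)

theorem rho_strictMono : StrictMono RL.ρ := by
  let : LocallyFiniteOrder L := Fintype.toLocallyFiniteOrder
  exact (strictMono_iff_forall_covBy RL.ρ).mpr fun S T h => by rw [RL.ρ_covby S T h]; omega

theorem rho_pos_iff {S : L} : 0 < RL.ρ S ↔ S ≠ ⊥ := by
  refine ⟨?_, fun h => RL.ρ_bot ▸ RL.rho_strictMono (bot_lt_iff_ne_bot.mpr h)⟩
  rintro h rfl
  simp [RL.ρ_bot] at h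

theorem exists_le_rho_eq (T : L) {k : ℕ} (hk : k ≤ RL.ρ T) : ∃ S ≤ T, RL.ρ S = k := by
  let : LocallyFiniteOrder L := Fintype.toLocallyFiniteOrder
  obtain ⟨n, hn, rfl⟩ : ∃ n ≤ RL.ρ T, k = RL.ρ T - n := ⟨RL.ρ T - k, by omega, by omega⟩
  clear hk
  induction n with
  | zero => exact ⟨T, le_rfl, rfl⟩
  | succ n ih =>
    obtain ⟨S, hST, hS⟩ := ih (by omega)
    have hS_ne_bot : S ≠ ⊥ := (RL.rho_pos_iff).mp (by omega)
    obtain ⟨U, -, hUS⟩ := exists_le_covBy_of_lt (bot_lt_iff_ne_bot.mpr hS_ne_bot)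
    exact ⟨U, hUS.le.trans hST, by rw [RL.ρ_covby U S hUS] at hS; omega⟩

end RegularLattice

namespace RegularSupport

variable {L : Type*} [Lattice L] [BoundedOrder L] [Fintype L]
  {G : Type*} [AddCommGroup G] [Fintype G] {RL : RegularLattice L} (RS : RegularSupport L G RL)

/-- The subgroup `G_σ(S)`. -/
def supportSubgroup (S : L) : AddSubgroup G where
  carrier := {g | RS.σ g ≤ S}
  zero_mem' := by simp [(RS.supp_zero 0).mpr rfl]
  add_mem' {a b} ha hb := (RS.supp_add a b).trans (sup_le ha hb)
  neg_mem' {a} ha := (RS.supp_neg a).trans_le ha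

theorem mem_supportSubgroup {S : L} {g : G} : g ∈ RS.supportSubgroup S ↔ RS.σ g ≤ S :=
  Iff.rfl

theorem card_supportSubgroup (S : L) : Nat.card (RS.supportSubgroup S) = RS.γ (RL.ρ S) :=
  RS.card_supp S

theorem rho_pos_of_ne_zero {g : G} (hg : g ≠ 0) : 0 < RL.ρ (RS.σ g) :=
  RL.rho_pos_iff.mpr fun h => hg ((RS.supp_zero g).mp h)

theorem disjoint_supportSubgroup {C : AddSubgroup G} {d : ℕ}
    (hd : ∀ g ∈ C, g ≠ 0 → d ≤ RL.ρ (RS.σ g)) {S : L} (hS : RL.ρ S < d) :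
    Disjoint C (RS.supportSubgroup S) := by
  refine AddSubgroup.disjoint_def.mpr fun {g} hgC hgS => ?_
  by_contra hg
  have := RL.rho_strictMono.monotone ((RS.mem_supportSubgroup).mp hgS)
  have := hd g hgC hg
  omega

end RegularSupport

theorem stmt_11_general {L : Type*} [Lattice L] [BoundedOrder L] [Fintype L]
    {G : Type*} [AddCommGroup G] [Fintype G] {RL : RegularLattice L}
    (RS : RegularSupport L G RL) (C : AddSubgroup G)
    (d : ℕ) (hd : IsLeast {n : ℕ | ∃ g ∈ C, g ≠ 0 ∧ RL.ρ (RS.σ g) = n} d) :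
    (Nat.card C : ℚ) ≤ (Fintype.card G : ℚ) / (RS.γ (d - 1) : ℚ) := by
  obtain ⟨⟨g, -, hg, rfl⟩, hmin⟩ := hd
  have hd_pos := RS.rho_pos_of_ne_zero hg
  obtain ⟨S, -, hS⟩ := RL.exists_le_rho_eq (RS.σ g) (Nat.sub_le _ 1)
  have hdisj : Disjoint C (RS.supportSubgroup S) :=
    RS.disjoint_supportSubgroup (fun x hxC hx => hmin ⟨x, hxC, hx, rfl⟩) (by omega)
  have hcard := AddSubgroup.card_mul_card_le_of_disjoint hdisj
  rw [RS.card_supportSubgroup, hS, Nat.card_eq_fintype_card (α := G)] at hcard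
  have hγ_pos : 0 < RS.γ (RL.ρ (RS.σ g) - 1) :=
    hS ▸ RS.card_supportSubgroup S ▸ Nat.card_pos
  rw [le_div_iff₀ (by exact_mod_cast hγ_pos)]
  exact_mod_cast hcard

/-- **Singleton-like bound.** If `C ⊆ G` is a non-zero code with minimum weight
`d = min {ω_σ(g) : g ∈ C, g ≠ 0}`, then `|C| ≤ |G| / γ_σ(d − 1)`.
Here `ω_σ(g) = ρ(σ(g))`. -/
theorem stmt_11 {L : Type*} [Lattice L] [BoundedOrder L] [Fintype L]
    {G : Type*} [AddCommGroup G] [Fintype G] {RL : RegularLattice L}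
    (RS : RegularSupport L G RL) (C : AddSubgroup G) (hC : C ≠ ⊥)
    (d : ℕ) (hd : IsLeast {n : ℕ | ∃ g ∈ C, g ≠ 0 ∧ RL.ρ (RS.σ g) = n} d) :
    (Nat.card C : ℚ) ≤ (Fintype.card G : ℚ) / (RS.γ (d - 1) : ℚ) :=
  stmt_11_general RS C d hd
end

section
/- Let σ : G ⇢ L be a regular support, r = rk(L), and let C ⊆ G be a code. For every integer 0 ≤ s ≤ r one has Σ_{S ∈ L : ρ(S) = s} |C_σ(S)| = Σ_{i=0}^{r} W_i(C, ω_σ) · μ_≥(s, i), where C_σ(S) = G_σ(S) ∩ C. -/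
open Finset
open scoped Classical Pointwise

/-
Double counting: both sides count the pairs `(g, S)` with `g ∈ C`, `ρ(S) = s` and `σ(g) ≤ S`.
Grouping by `S` gives the left-hand side; grouping by `g`, each `g` lies below exactly
`μ_≥(s, ω_σ(g))` elements of rank `s`, and grouping these by the weight `ω_σ(g) ≤ r` gives
the right-hand side.
-/

namespace RegularLattice

variable {L : Type*} [Lattice L] [BoundedOrder L] [Fintype L] (RL : RegularLattice L)

lemma rho_mono {S T : L} (hST : S ≤ T) : RL.ρ S ≤ RL.ρ T := by
  induction S using (wellFounded_gt (α := L)).induction with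
  | _ S ih =>
    rcases hST.eq_or_lt with rfl | hlt
    · exact le_rfl
    · obtain ⟨U, hSU, hUT⟩ := exists_covBy_le_of_lt hlt
      have := RL.ρ_covby S U hSU
      have := ih U hSU.lt hUT
      omega

lemma rho_le_r (S : L) : RL.ρ S ≤ RL.r :=
  RL.ρ_top ▸ RL.rho_mono le_top

lemma card_filter_above_eq_muGE (s : ℕ) (T : L) :
    #{S | RL.ρ S = s ∧ T ≤ S} = RL.muGE s (RL.ρ T) := by
  rw [← RL.card_ge, Nat.card_eq_fintype_card, Fintype.card_subtype]

variable {G : Type*}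

lemma sum_card_filter_le_eq_sum_muGE (σ : G → L) (C : Finset G) (s : ℕ) :
    ∑ S : L, (if RL.ρ S = s then #{g ∈ C | σ g ≤ S} else 0)
      = ∑ g ∈ C, RL.muGE s (RL.ρ (σ g)) := by
  have := sum_card_bipartiteAbove_eq_sum_card_bipartiteBelow
    (s := ({S | RL.ρ S = s} : Finset L)) (t := C) (r := fun S g => σ g ≤ S)
  simp only [bipartiteAbove, bipartiteBelow, sum_filter] at this
  rw [this]
  refine sum_congr rfl fun g _ => ?_
  rw [← RL.card_filter_above_eq_muGE, filter_filter]

lemma sum_muGE_eq_sum_weight_mul (σ : G → L) (C : Finset G) (s : ℕ) :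
    ∑ g ∈ C, RL.muGE s (RL.ρ (σ g))
      = ∑ i ∈ range (RL.r + 1), #{g ∈ C | RL.ρ (σ g) = i} * RL.muGE s i := by
  rw [← sum_fiberwise_of_maps_to (g := fun g => RL.ρ (σ g)) (t := range (RL.r + 1))
    fun g _ => mem_range_succ_iff.mpr (RL.rho_le_r _)]
  refine sum_congr rfl fun i _ => ?_
  rw [card_eq_sum_ones, sum_mul, one_mul]
  exact sum_congr rfl fun g hg => by rw [(mem_filter.mp hg).2]

end RegularLattice

theorem stmt_13_general {L : Type*} [Lattice L] [BoundedOrder L] [Fintype L]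
    {G : Type*} [AddCommGroup G] [Fintype G] {RL : RegularLattice L}
    (RS : RegularSupport L G RL) (C : AddSubgroup G) (s : ℕ) :
    ∑ S : L, (if RL.ρ S = s then Nat.card {g : G // g ∈ C ∧ RS.σ g ≤ S} else 0)
      = ∑ i ∈ Finset.range (RL.r + 1),
          Nat.card {g : G // g ∈ C ∧ RL.ρ (RS.σ g) = i} * RL.muGE s i := by
  have hC : ∀ (p : G → Prop) [DecidablePred p],
      Nat.card {g : G // g ∈ C ∧ p g} = #{g ∈ {g | g ∈ C} | p g} := by
    intro p _
    rw [Nat.card_eq_fintype_card, Fintype.card_subtype, filter_filter]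
  simp only [hC]
  rw [RL.sum_card_filter_le_eq_sum_muGE, RL.sum_muGE_eq_sum_weight_mul]

/-- For every code `C ⊆ G` and every `0 ≤ s ≤ r`,
`Σ_{S ∈ L, ρ(S) = s} |C_σ(S)| = Σ_{i=0}^r W_i(C, ω_σ) μ_≥(s, i)`,
where `C_σ(S) = G_σ(S) ∩ C` and `W_i(C, ω_σ) = |{g ∈ C : ρ(σ(g)) = i}|`. -/
theorem stmt_13 {L : Type*} [Lattice L] [BoundedOrder L] [Fintype L]
    {G : Type*} [AddCommGroup G] [Fintype G] {RL : RegularLattice L}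
    (RS : RegularSupport L G RL) (C : AddSubgroup G) (s : ℕ) (hs : s ≤ RL.r) :
    ∑ S : L, (if RL.ρ S = s then Nat.card {g : G // g ∈ C ∧ RS.σ g ≤ S} else 0)
      = ∑ i ∈ Finset.range (RL.r + 1),
          Nat.card {g : G // g ∈ C ∧ RL.ρ (RS.σ g) = i} * RL.muGE s i :=
  stmt_13_general RS C s
end

section
/- For every g ∈ 𝔽_q^n having exactly i nonzero entries (0 ≤ i ≤ n) and every 0 ≤ j ≤ n, the pair of Hamming weights (ω_H on G^n, ω_H on Ĝ^n) over a finite abelian group G is compatible with Krawtchouk coefficients K(i,j) = Σ_{s=0}^{n} (−1)^{j−s} |G|^{s} C(n−i, s) C(n−s, j−s). Consequently, for every code C ⊆ G^n (a subgroup of G^n) and every 0 ≤ j ≤ n: W_j(C*, ω_H) = (1/|C|) Σ_{i=0}^{n} W_i(C, ω_H) Σ_{s=0}^{n} (−1)^{j−s} |G|^{s} C(n−i, s) C(n−s, j−s), where W_j(C*, ω_H) counts characters in C* with exactly j nontrivial components. -/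
/-!
Fix `g` with `i` nonzero entries. Since `χ(g) = ∏ₖ χₖ(gₖ)`, the enumerator `∑_χ χ(g) X^{ω_H(χ)}`
factors over the coordinates, and by orthogonality of the characters of `G` a coordinate with
`gₖ = 0` contributes `|G| X + (1 - X)` while one with `gₖ ≠ 0` contributes `1 - X`. Expanding
`(|G| X + (1 - X))^{n-i} (1 - X)^i` binomially gives the Krawtchouk coefficients. Summing the first
identity over a code `C` proves the second, because `∑_{g ∈ C} χ(g)` is `|C|` for `χ ∈ C*` and `0`
otherwise.
-/

open Polynomial Finset
open scoped Classical

namespace AddChar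

variable {A M : Type*}

noncomputable def unitsEquiv [AddGroup A] [Monoid M] : AddChar A Mˣ ≃ AddChar A M where
  toFun ψ := (Units.coeHom M).compAddChar ψ
  invFun ψ :=
    { toFun := fun a => (ψ.val_isUnit a).unit
      map_zero_eq_one' := by ext; simp
      map_add_eq_mul' := fun a b => by ext; simp [map_add_eq_mul] }
  left_inv ψ := by ext; rfl
  right_inv ψ := by ext; rfl

lemma sum_units_apply_eq_ite [AddCommGroup A] [Fintype A] [Fintype (AddChar A ℂˣ)] (a : A) :
    ∑ ψ : AddChar A ℂˣ, (ψ a : ℂ) = if a = 0 then (Fintype.card A : ℂ) else 0 := by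
  rw [← sum_apply_eq_ite a]
  exact Fintype.sum_equiv unitsEquiv _ _ fun _ => rfl

def piProd {ι : Type*} [Fintype ι] [AddMonoid A] [CommMonoid M] (χ : ι → AddChar A M) :
    AddChar (ι → A) M where
  toFun g := ∏ i, χ i (g i)
  map_zero_eq_one' := by simp
  map_add_eq_mul' g h := by simp [map_add_eq_mul, prod_mul_distrib]

lemma piProd_apply {ι : Type*} [Fintype ι] [AddMonoid A] [CommMonoid M] (χ : ι → AddChar A M)
    (g : ι → A) : piProd χ g = ∏ i, χ i (g i) := rfl

lemma sum_mem_addSubgroup_eq_ite [AddGroup A] [Fintype A] [CommSemiring M] [IsDomain M]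
    (ψ : AddChar A M) (H : AddSubgroup A) :
    ∑ a ∈ univ.filter (· ∈ H), ψ a = if ∀ a ∈ H, ψ a = 1 then (Nat.card H : M) else 0 := by
  rw [sum_subtype _ (fun _ => mem_filter_univ _), Nat.card_eq_fintype_card]
  refine (sum_eq_ite (ψ.compAddMonoidHom H.subtype)).trans (if_congr ?_ rfl rfl)
  simp [DFunLike.ext_iff]

end AddChar

section Krawtchouk

variable {R : Type*} [CommRing R]

lemma Polynomial.coeff_one_sub_X_pow (m k : ℕ) :
    ((1 - X : R[X]) ^ m).coeff k = (-1) ^ k * (m.choose k : R) := by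
  have hcomp : (1 - X : R[X]) ^ m = ((1 + X) ^ m).comp (C (-1) * X) := by
    simp [sub_eq_add_neg]
  rw [hcomp, comp_C_mul_X_coeff, coeff_one_add_X_pow, mul_comm]

/-- The guard `s ≤ j` stands for `C(n - s, j - s) = 0` when `j < s`, which truncated subtraction
would turn into `C(n - s, 0) = 1`. -/
def krawtchouk (q : R) (n i j : ℕ) : R :=
  ∑ s ∈ range (n + 1), if s ≤ j then
    (-1) ^ (j - s) * q ^ s * ((n - i).choose s : R) * ((n - s).choose (j - s) : R) else 0

lemma krawtchouk_eq_coeff (q : R) {n i : ℕ} (hi : i ≤ n) (j : ℕ) :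
    krawtchouk q n i j = ((C q * X + (1 - X)) ^ (n - i) * (1 - X) ^ i).coeff j := by
  have hexpand : (C q * X + (1 - X)) ^ (n - i) * (1 - X) ^ i
      = ∑ s ∈ range (n + 1), C (q ^ s * ((n - i).choose s : R)) * (X ^ s * (1 - X) ^ (n - s)) := by
    rw [add_pow, sum_mul, ← sum_subset (range_subset_range.2 (Nat.succ_le_succ (Nat.sub_le n i)))]
    · refine sum_congr rfl fun s hs => ?_
      have hns : n - s = n - i - s + i := by rw [mem_range] at hs; omega
      rw [hns, mul_pow, ← C_pow, C_mul, ← C_eq_natCast, pow_add]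
      ring
    · intro s _ hs
      rw [mem_range, not_lt] at hs
      simp [Nat.choose_eq_zero_of_lt (Nat.lt_of_succ_le hs)]
  rw [hexpand, finsetSum_coeff, krawtchouk]
  refine sum_congr rfl fun s _ => ?_
  rw [coeff_C_mul, coeff_X_pow_mul', coeff_one_sub_X_pow]
  split_ifs <;> ring

end Krawtchouk

section Hamming

variable {G ι : Type*} [AddCommGroup G] [Fintype G] [Fintype (AddChar G ℂˣ)] [Fintype ι]
  [DecidableEq ι]

lemma sum_C_units_apply_mul_X_pow (a : G) :
    ∑ ψ : AddChar G ℂˣ, C (ψ a : ℂ) * X ^ (if ψ ≠ 0 then 1 else 0)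
      = if a = 0 then C (Fintype.card G : ℂ) * X + (1 - X) else 1 - X := by
  have hsplit : ∀ ψ : AddChar G ℂˣ, C (ψ a : ℂ) * X ^ (if ψ ≠ 0 then 1 else 0)
      = C (ψ a : ℂ) * X + if ψ = 0 then 1 - X else 0 := by
    intro ψ
    by_cases hψ : ψ = 0 <;> simp [hψ]
  rw [sum_congr rfl fun ψ _ => hsplit ψ, sum_add_distrib, ← sum_mul, ← map_sum,
    AddChar.sum_units_apply_eq_ite, Fintype.sum_ite_eq' (0 : AddChar G ℂˣ)]
  split_ifs <;> simp

lemma sum_piProd_mul_X_pow_hammingNorm (g : ι → G) :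
    ∑ χ : ι → AddChar G ℂˣ, C (AddChar.piProd χ g : ℂ) * X ^ hammingNorm χ
      = (C (Fintype.card G : ℂ) * X + (1 - X)) ^ (Fintype.card ι - hammingNorm g)
          * (1 - X) ^ hammingNorm g := by
  have hprod : ∀ χ : ι → AddChar G ℂˣ, C (AddChar.piProd χ g : ℂ) * X ^ hammingNorm χ
      = ∏ i, C (χ i (g i) : ℂ) * X ^ (if χ i ≠ 0 then 1 else 0) := by
    intro χ
    rw [prod_mul_distrib, prod_pow_eq_pow_sum, ← card_filter, AddChar.piProd_apply,
      Units.coe_prod, map_prod]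
    rfl
  have hzero : #{i | g i = 0} = Fintype.card ι - hammingNorm g := by
    rw [hammingNorm, ← card_compl, compl_filter]
    simp
  rw [sum_congr rfl fun χ _ => hprod χ, ← Fintype.prod_sum
    (fun i (ψ : AddChar G ℂˣ) => C (ψ (g i) : ℂ) * X ^ (if ψ ≠ 0 then 1 else 0))]
  simp_rw [sum_C_units_apply_mul_X_pow]
  rw [prod_ite, prod_const, prod_const, hzero]
  rfl

theorem sum_ite_hammingNorm_eq_krawtchouk (g : ι → G) (j : ℕ) :
    ∑ χ : ι → AddChar G ℂˣ, (if hammingNorm χ = j then (AddChar.piProd χ g : ℂ) else 0)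
      = krawtchouk (Fintype.card G : ℂ) (Fintype.card ι) (hammingNorm g) j := by
  rw [krawtchouk_eq_coeff _ hammingNorm_le_card_fintype, ← sum_piProd_mul_X_pow_hammingNorm,
    finsetSum_coeff]
  simp only [coeff_C_mul_X_pow, @eq_comm _ j]

theorem card_dual_hammingNorm_mul_card (C : AddSubgroup (ι → G)) (j : ℕ) :
    (Nat.card {χ : ι → AddChar G ℂˣ // (∀ g ∈ C, AddChar.piProd χ g = 1) ∧ hammingNorm χ = j} : ℂ)
        * Nat.card C
      = ∑ i ∈ range (Fintype.card ι + 1),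
          (Nat.card {g : ι → G // g ∈ C ∧ hammingNorm g = i} : ℂ)
            * krawtchouk (Fintype.card G : ℂ) (Fintype.card ι) i j := by
  have hdual : ∀ χ : ι → AddChar G ℂˣ, ∑ g ∈ univ.filter (· ∈ C), (AddChar.piProd χ g : ℂ)
      = if ∀ g ∈ C, AddChar.piProd χ g = 1 then (Nat.card C : ℂ) else 0 := by
    intro χ
    simpa using
      AddChar.sum_mem_addSubgroup_eq_ite ((Units.coeHom ℂ).compAddChar (AddChar.piProd χ)) C
  calc _ = ∑ χ : ι → AddChar G ℂˣ,
          if hammingNorm χ = j then ∑ g ∈ univ.filter (· ∈ C), (AddChar.piProd χ g : ℂ) else 0 := by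
        simp_rw [hdual, ← ite_and, ← sum_filter, sum_const, nsmul_eq_mul, and_comm,
          Nat.card_eq_fintype_card, Fintype.card_subtype]
    _ = ∑ g ∈ univ.filter (· ∈ C),
          krawtchouk (Fintype.card G : ℂ) (Fintype.card ι) (hammingNorm g) j := by
        simp_rw [ite_sum_zero, sum_comm (s := univ), sum_ite_hammingNorm_eq_krawtchouk]
    _ = _ := by
        rw [← sum_fiberwise_of_maps_to' (t := range (Fintype.card ι + 1))
          (fun g _ => mem_range.2 (Nat.lt_succ_of_le hammingNorm_le_card_fintype))
          (fun i => krawtchouk (Fintype.card G : ℂ) (Fintype.card ι) i j)]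
        simp_rw [sum_const, nsmul_eq_mul, filter_filter, Nat.card_eq_fintype_card,
          Fintype.card_subtype]

end Hamming

theorem stmt_16_general {G : Type*} [AddCommGroup G] [Fintype G] [Fintype (AddChar G ℂˣ)]
    (n : ℕ) :
    (∀ g : Fin n → G, ∀ j : ℕ, j ≤ n →
      ∑ χ : Fin n → AddChar G ℂˣ,
          (if (Finset.univ.filter fun i => χ i ≠ 1).card = j
            then (((∏ i, χ i (g i) : ℂˣ)) : ℂ) else 0)
        = ∑ s ∈ Finset.range (n + 1),
            (if s ≤ j then
              (-1 : ℂ) ^ (j - s) * (Fintype.card G : ℂ) ^ s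
                * ((n - (Finset.univ.filter fun i => g i ≠ 0).card).choose s : ℂ)
                * ((n - s).choose (j - s) : ℂ)
            else 0)) ∧
    (∀ C : AddSubgroup (Fin n → G), ∀ j : ℕ, j ≤ n →
      (Nat.card {χ : Fin n → AddChar G ℂˣ //
          (∀ g ∈ C, (∏ i, χ i (g i)) = 1)
            ∧ (Finset.univ.filter fun i => χ i ≠ 1).card = j} : ℂ)
        = (1 / (Nat.card C : ℂ))
            * ∑ i ∈ Finset.range (n + 1),
                (Nat.card {g : Fin n → G //
                    g ∈ C ∧ (Finset.univ.filter fun i' => g i' ≠ 0).card = i} : ℂ)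
                  * ∑ s ∈ Finset.range (n + 1),
                      (if s ≤ j then
                        (-1 : ℂ) ^ (j - s) * (Fintype.card G : ℂ) ^ s
                          * ((n - i).choose s : ℂ) * ((n - s).choose (j - s) : ℂ)
                      else 0)) := by
  -- `hammingNorm` and `AddChar.piProd` unfold to the weights and products written out above
  refine ⟨fun g j _ => ?_, fun C j _ => ?_⟩
  · have h := sum_ite_hammingNorm_eq_krawtchouk g j
    rw [Fintype.card_fin] at h
    exact h
  · have hC : (Nat.card C : ℂ) ≠ 0 := Nat.cast_ne_zero.2 Nat.card_pos.ne'
    rw [one_div_mul_eq_div, eq_div_iff hC]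
    have h := card_dual_hammingNorm_mul_card C j
    rw [Fintype.card_fin] at h
    exact h

/-- **MacWilliams identities for the Hamming weight over a finite abelian group.**
The character group of `G^n` is `Ĝ^n = Fin n → AddChar G ℂˣ`, acting by
`χ(g) = Π_i χ_i(g_i)`. The Hamming weight of `g ∈ G^n` is the number of nonzero
entries; the Hamming weight of `χ ∈ Ĝ^n` is the number of nontrivial components.
First conjunct: for every `g` with exactly `i` nonzero entries and every `0 ≤ j ≤ n`,
`Σ_{χ : ω_H(χ) = j} χ(g) = Σ_{s=0}^n (−1)^{j−s} |G|^s C(n−i,s) C(n−s,j−s)`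
(terms with `s > j` vanish, by the convention that binomial coefficients with
negative lower index are zero), so the pair `(ω_H, ω_H)` is compatible with these
Krawtchouk coefficients. Second conjunct: for every code `C ⊆ G^n` and `0 ≤ j ≤ n`,
`W_j(C*, ω_H) = (1/|C|) Σ_{i=0}^n W_i(C, ω_H) Σ_{s=0}^n (−1)^{j−s} |G|^s C(n−i,s) C(n−s,j−s)`. -/
theorem stmt_16 {G : Type*} [AddCommGroup G] [Fintype G] [Fintype (AddChar G ℂˣ)]
    (n : ℕ) (hn : 1 ≤ n) :
    (∀ g : Fin n → G, ∀ j : ℕ, j ≤ n →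
      ∑ χ : Fin n → AddChar G ℂˣ,
          (if (Finset.univ.filter fun i => χ i ≠ 1).card = j
            then (((∏ i, χ i (g i) : ℂˣ)) : ℂ) else 0)
        = ∑ s ∈ Finset.range (n + 1),
            (if s ≤ j then
              (-1 : ℂ) ^ (j - s) * (Fintype.card G : ℂ) ^ s
                * ((n - (Finset.univ.filter fun i => g i ≠ 0).card).choose s : ℂ)
                * ((n - s).choose (j - s) : ℂ)
            else 0)) ∧
    (∀ C : AddSubgroup (Fin n → G), ∀ j : ℕ, j ≤ n →
      (Nat.card {χ : Fin n → AddChar G ℂˣ //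
          (∀ g ∈ C, (∏ i, χ i (g i)) = 1)
            ∧ (Finset.univ.filter fun i => χ i ≠ 1).card = j} : ℂ)
        = (1 / (Nat.card C : ℂ))
            * ∑ i ∈ Finset.range (n + 1),
                (Nat.card {g : Fin n → G //
                    g ∈ C ∧ (Finset.univ.filter fun i' => g i' ≠ 0).card = i} : ℂ)
                  * ∑ s ∈ Finset.range (n + 1),
                      (if s ≤ j then
                        (-1 : ℂ) ^ (j - s) * (Fintype.card G : ℂ) ^ s
                          * ((n - i).choose s : ℂ) * ((n - s).choose (j - s) : ℂ)
                      else 0)) :=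
  stmt_16_general n
end

section
/- Let q be a prime power, 1 ≤ k ≤ m, and let f : Mat → 𝔽_q be a non-zero 𝔽_q-linear map on the space of k×m matrices over 𝔽_q. Let R_f be the rank of any matrix generating the one-dimensional space ker(f)^⊥ (the trace-product orthogonal of ker(f)). Then for every 0 ≤ j ≤ k, the number of matrices of rank j in ker(f) equals (1/q) · Σ_{s=0}^{k} (−1)^{j−s} q^{ms + C(j−s,2)} · [k−s choose k−j]_q · ( [k choose s]_q + (q−1) [k−R_f choose s]_q ), where C(j−s,2) denotes binom(j−s,2). -/
open Matrix

/-- The Gaussian (`q`-ary) binomial coefficient `[n choose k]_q`, defined by the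
`q`-Pascal recursion `[n+1, k+1]_q = [n, k]_q + q^(k+1) [n, k+1]_q`,
with `[n, 0]_q = 1` and `[0, k+1]_q = 0`. -/
def gaussBinom (q : ℕ) : ℕ → ℕ → ℕ
  | _, 0 => 1
  | 0, _ + 1 => 0
  | n + 1, k + 1 => gaussBinom q n k + q ^ (k + 1) * gaussBinom q n (k + 1)

/-!
Write `A_r` for the number of rank-`r` matrices in `ker f`, and count the pairs `(M, U)` with
`M ∈ ker f` and `U ≤ F^k` an `s`-dimensional subspace containing the column space of `M`.
A matrix of rank `r` lies in `[k-r, k-s]_q` such pairs, so the count is `∑_r A_r [k-r, k-s]_q`.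
On the other side, the matrices with all columns in `U` form a space of dimension `m s`, and
`f(M) = ∑_j ⟨N_j, M_j⟩` (a sum over columns) vanishes on all of it exactly when
`U ≤ ker Nᵀ`, a subspace of dimension `k - R_f`; otherwise `f` cuts out a hyperplane. Hence
`q ∑_r A_r [k-r, k-s]_q = q^{ms} ([k, s]_q + (q-1) [k-R_f, s]_q)` for every `s ≤ k`, and
Gaussian-binomial inversion of this triangular system gives the formula for `A_j`.
-/

open Finset

@[simp] lemma gaussBinom_zero_right (q n : ℕ) : gaussBinom q n 0 = 1 := by cases n <;> rfl

lemma gaussBinom_succ_succ (q n k : ℕ) :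
    gaussBinom q (n + 1) (k + 1) = gaussBinom q n k + q ^ (k + 1) * gaussBinom q n (k + 1) :=
  rfl

lemma gaussBinom_eq_zero_of_lt (q : ℕ) : ∀ {n k : ℕ}, n < k → gaussBinom q n k = 0
  | 0, _ + 1, _ => rfl
  | n + 1, k + 1, h => by
    simp [gaussBinom_succ_succ, gaussBinom_eq_zero_of_lt q (by omega : n < k),
      gaussBinom_eq_zero_of_lt q (by omega : n < k + 1)]

def qFactorial (q n : ℕ) : ℕ := ∏ i ∈ range n, ∑ j ∈ range (i + 1), q ^ j

lemma qFactorial_pos (q n : ℕ) : 0 < qFactorial q n :=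
  prod_pos fun _ _ => sum_pos' (fun _ _ => Nat.zero_le _) ⟨0, by simp⟩

theorem gaussBinom_mul_qFactorial_mul (q : ℕ) :
    ∀ a b, gaussBinom q (a + b) a * (qFactorial q a * qFactorial q b) = qFactorial q (a + b)
  | 0, b => by simp [qFactorial]
  | a + 1, 0 => by
    have ih := gaussBinom_mul_qFactorial_mul q a 0
    simp only [add_zero, gaussBinom_succ_succ, gaussBinom_eq_zero_of_lt q (Nat.lt_succ_self a),
      qFactorial, prod_range_succ] at ih ⊢
    linear_combination (∑ j ∈ range (a + 1), q ^ j) * ih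
  | a + 1, b + 1 => by
    have ih₁ := gaussBinom_mul_qFactorial_mul q a (b + 1)
    have ih₂ := gaussBinom_mul_qFactorial_mul q (a + 1) b
    have qNum_add : ∑ j ∈ range (a + b + 2), q ^ j
        = ∑ j ∈ range (a + 1), q ^ j + q ^ (a + 1) * ∑ j ∈ range (b + 1), q ^ j := by
      rw [show a + b + 2 = a + 1 + (b + 1) by omega, sum_range_add, mul_sum]
      simp [pow_add]
    rw [show a + 1 + (b + 1) = a + (b + 1) + 1 by omega, gaussBinom_succ_succ]
    rw [show a + 1 + b = a + (b + 1) by omega] at ih₂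
    simp only [qFactorial, prod_range_succ] at ih₁ ih₂ ⊢
    rw [show a + (b + 1) + 1 = a + b + 2 by omega, qNum_add]
    linear_combination (∑ j ∈ range (a + 1), q ^ j) * ih₁
      + q ^ (a + 1) * (∑ j ∈ range (b + 1), q ^ j) * ih₂

lemma gaussBinom_symm_add (q a b : ℕ) : gaussBinom q (a + b) a = gaussBinom q (a + b) b := by
  have h₁ := gaussBinom_mul_qFactorial_mul q a b
  have h₂ := gaussBinom_mul_qFactorial_mul q b a
  rw [add_comm b, mul_comm (qFactorial q b)] at h₂
  exact Nat.eq_of_mul_eq_mul_right (Nat.mul_pos (qFactorial_pos q a) (qFactorial_pos q b))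
    (h₁.trans h₂.symm)

lemma gaussBinom_symm (q : ℕ) {n k : ℕ} (h : k ≤ n) :
    gaussBinom q n (n - k) = gaussBinom q n k := by
  obtain ⟨a, rfl⟩ := Nat.exists_eq_add_of_le h
  rw [Nat.add_sub_cancel_left, gaussBinom_symm_add]

lemma gaussBinom_self (q n : ℕ) : gaussBinom q n n = 1 := by
  simpa using gaussBinom_symm_add q n 0

theorem gaussBinom_mul_gaussBinom (q x y z : ℕ) :
    gaussBinom q (x + y + z) (y + z) * gaussBinom q (y + z) z
      = gaussBinom q (x + y + z) z * gaussBinom q (x + y) y := by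
  have h₁ := gaussBinom_mul_qFactorial_mul q (y + z) x
  have h₂ := gaussBinom_mul_qFactorial_mul q z y
  have h₃ := gaussBinom_mul_qFactorial_mul q z (x + y)
  have h₄ := gaussBinom_mul_qFactorial_mul q y x
  rw [add_comm (y + z), ← add_assoc] at h₁
  rw [add_comm z] at h₂ h₃
  rw [add_comm y] at h₄
  have hpos := Nat.mul_pos (Nat.mul_pos (qFactorial_pos q x) (qFactorial_pos q y))
    (qFactorial_pos q z)
  refine Nat.eq_of_mul_eq_mul_right hpos ?_
  calc _ = gaussBinom q (x + y + z) (y + z) * (qFactorial q (y + z) * qFactorial q x) := by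
        rw [← h₂]; ring
    _ = _ := by rw [h₁, ← h₃, ← h₄]; ring

section Inversion

variable {R : Type*} [CommRing R]

lemma sum_range_neg_one_pow_mul_gaussBinom (q d : ℕ) :
    ∑ v ∈ range (d + 1), (-1 : R) ^ v * (q : R) ^ v.choose 2 * gaussBinom q d v
      = if d = 0 then 1 else 0 := by
  rcases d with _ | e
  · simp
  set g : ℕ → R := fun v => (-1) ^ v * (q : R) ^ (v + 1).choose 2 * gaussBinom q e v
  have telescope : ∀ v, (-1 : R) ^ (v + 1) * (q : R) ^ (v + 1).choose 2
      * gaussBinom q (e + 1) (v + 1) = g (v + 1) - g v := by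
    intro v
    simp only [g, gaussBinom_succ_succ, Nat.choose_succ_succ' (v + 1), Nat.choose_one_right]
    push_cast
    ring
  rw [sum_range_succ', sum_congr rfl fun v _ => telescope v, sum_range_sub]
  simp [g, gaussBinom_eq_zero_of_lt q (Nat.lt_succ_self e)]

theorem sum_range_mul_gaussBinom_eq_ite (q : ℕ) {k r j : ℕ} (hr : r ≤ k) (hj : j ≤ k) :
    ∑ s ∈ range (k + 1), (-1 : R) ^ (j - s) * (q : R) ^ (j - s).choose 2
        * gaussBinom q (k - s) (k - j) * gaussBinom q (k - r) (k - s)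
      = if r = j then 1 else 0 := by
  have vanish : ∀ s ≤ k, s < r ∨ j < s → (-1 : R) ^ (j - s) * (q : R) ^ (j - s).choose 2
      * gaussBinom q (k - s) (k - j) * gaussBinom q (k - r) (k - s) = 0 := by
    rintro s hs (hsr | hjs)
    · rw [gaussBinom_eq_zero_of_lt q (by omega : k - r < k - s), Nat.cast_zero, mul_zero]
    · rw [gaussBinom_eq_zero_of_lt q (by omega : k - s < k - j), Nat.cast_zero, mul_zero,
        zero_mul]
  rcases lt_or_ge j r with hjr | hrj
  · rw [if_neg (by omega)]
    exact sum_eq_zero fun s hs => vanish s (by simp at hs; omega) (by omega)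
  obtain ⟨d, rfl⟩ := Nat.exists_eq_add_of_le hrj
  have reflect := sum_Ico_reflect (fun s => (-1 : R) ^ (r + d - s)
      * (q : R) ^ (r + d - s).choose 2 * gaussBinom q (k - s) (k - (r + d))
      * gaussBinom q (k - r) (k - s)) 0 (by omega : d + 1 ≤ r + d + 1)
  rw [show r + d + 1 - (d + 1) = r by omega, Nat.sub_zero, Nat.Ico_zero_eq_range] at reflect
  rw [← sum_subset (s₁ := Ico r (r + d + 1))
      (fun s hs => mem_range.mpr (by have := mem_Ico.mp hs; omega))
      (fun s hs hs' => vanish s (Nat.lt_succ_iff.mp (mem_range.mp hs))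
        (by rw [mem_Ico] at hs'; omega)), ← reflect]
  -- With `s = r + d - v`, the product of the two coefficients factors through `[d, v]_q`.
  have term : ∀ v ∈ range (d + 1), (-1 : R) ^ (r + d - (r + d - v))
      * (q : R) ^ (r + d - (r + d - v)).choose 2
      * gaussBinom q (k - (r + d - v)) (k - (r + d)) * gaussBinom q (k - r) (k - (r + d - v))
      = gaussBinom q (k - r) (k - (r + d))
          * ((-1) ^ v * (q : R) ^ v.choose 2 * gaussBinom q d v) := by
    intro v hv
    have hvd : v ≤ d := Nat.lt_succ_iff.mp (mem_range.mp hv)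
    have tri := gaussBinom_mul_gaussBinom q (d - v) v (k - (r + d))
    rw [show d - v + v + (k - (r + d)) = k - r by omega,
      show v + (k - (r + d)) = k - (r + d - v) by omega, show d - v + v = d by omega] at tri
    replace tri := congrArg (Nat.cast : ℕ → R) tri
    push_cast at tri
    rw [show r + d - (r + d - v) = v by omega]
    linear_combination (-1 : R) ^ v * (q : R) ^ v.choose 2 * tri
  rw [sum_congr rfl term, ← mul_sum, sum_range_neg_one_pow_mul_gaussBinom]
  rcases d with _ | d
  · simp [gaussBinom_self]
  · simp

theorem gaussBinom_inversion (q k : ℕ) (a b : ℕ → R)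
    (hab : ∀ s ≤ k, ∑ r ∈ range (k + 1), a r * gaussBinom q (k - r) (k - s) = b s)
    {j : ℕ} (hj : j ≤ k) :
    a j = ∑ s ∈ range (k + 1),
      (-1) ^ (j - s) * (q : R) ^ (j - s).choose 2 * gaussBinom q (k - s) (k - j) * b s := by
  calc a j = ∑ r ∈ range (k + 1), a r * if r = j then 1 else 0 := by
        simp [mem_range, Nat.lt_succ_iff.mpr hj]
    _ = ∑ r ∈ range (k + 1), ∑ s ∈ range (k + 1),
          (-1) ^ (j - s) * (q : R) ^ (j - s).choose 2 * gaussBinom q (k - s) (k - j)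
            * (a r * gaussBinom q (k - r) (k - s)) := by
        refine sum_congr rfl fun r hr => ?_
        rw [← sum_range_mul_gaussBinom_eq_ite q (Nat.lt_succ_iff.mp (mem_range.mp hr)) hj,
          mul_sum]
        exact sum_congr rfl fun s _ => by ring
    _ = _ := by
        rw [sum_comm]
        refine sum_congr rfl fun s hs => ?_
        rw [← mul_sum, hab s (Nat.lt_succ_iff.mp (mem_range.mp hs))]

theorem gaussBinom_mul_prod_pow_sub_pow (q : ℕ) : ∀ n s,
    (gaussBinom q n s : R) * ∏ i ∈ range s, ((q : R) ^ s - q ^ i)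
      = ∏ i ∈ range s, ((q : R) ^ n - q ^ i)
  | _, 0 => by simp
  | 0, s + 1 => by simp [gaussBinom, prod_range_succ']
  | n + 1, s + 1 => by
    have ih₁ := gaussBinom_mul_prod_pow_sub_pow q n s
    have ih₂ := gaussBinom_mul_prod_pow_sub_pow q n (s + 1)
    have peel : ∀ n, ∏ i ∈ range (s + 1), ((q : R) ^ (n + 1) - q ^ i)
        = ((q : R) ^ (n + 1) - 1) * q ^ s * ∏ i ∈ range s, ((q : R) ^ n - q ^ i) := by
      intro n
      simp only [prod_range_succ', pow_zero, pow_succ, ← mul_sub_right_distrib,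
        prod_mul_distrib, prod_const, card_range]
      ring
    rw [peel, peel, gaussBinom_succ_succ]
    rw [peel, prod_range_succ] at ih₂
    push_cast
    linear_combination ((q : R) ^ (s + 1) - 1) * q ^ s * ih₁ + (q : R) ^ (s + 1) * ih₂

end Inversion

section Subspaces

open Module Submodule

variable {F V : Type*} [Field F] [AddCommGroup V] [Module F V]

lemma finrank_comap_mkQ [FiniteDimensional F V] (T : Submodule F V) (U : Submodule F (V ⧸ T)) :
    finrank F (U.comap T.mkQ) = finrank F U + finrank F T := by
  set S := U.comap T.mkQ
  have hTS : T ≤ S := fun x hx => by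
    simp [S, (Submodule.Quotient.mk_eq_zero T).mpr hx]
  have rank_nullity := LinearMap.finrank_range_add_finrank_ker (T.mkQ.domRestrict S)
  rw [LinearMap.range_domRestrict, map_comap_eq_of_surjective T.mkQ_surjective,
    LinearMap.ker_domRestrict, ker_mkQ, (comapSubtypeEquivOfLe hTS).finrank_eq] at rank_nullity
  exact rank_nullity.symm

variable [Fintype F]

lemma natCard_ker_mul_card (g : V →ₗ[F] F) (hg : g ≠ 0) :
    Nat.card (LinearMap.ker g) * Fintype.card F = Nat.card V := by
  rw [card_eq_card_quotient_mul_card (LinearMap.ker g),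
    Nat.card_congr (g.quotKerEquivOfSurjective (LinearMap.surjective_of_ne_zero hg)).toEquiv,
    Nat.card_eq_fintype_card (α := F)]

variable [Finite V]

attribute [local instance] Fintype.ofFinite

lemma natCard_linearIndependent_eq_mul (s : ℕ) :
    Nat.card {t : Fin s → V // LinearIndependent F t}
      = Nat.card {U : Submodule F V // finrank F U = s}
          * ∏ i ∈ range s, (Fintype.card F ^ s - Fintype.card F ^ i) := by
  classical
  let Φ : {t : Fin s → V // LinearIndependent F t} → {U : Submodule F V // finrank F U = s} :=
    fun t => ⟨span F (Set.range t.1), by rw [finrank_span_eq_card t.2, Fintype.card_fin]⟩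
  have fiber : ∀ U, Nat.card {t // Φ t = U}
      = ∏ i ∈ range s, (Fintype.card F ^ s - Fintype.card F ^ i) := by
    rintro ⟨U, hU⟩
    have spans : ∀ t : {t : Fin s → V // LinearIndependent F t},
        Φ t = ⟨U, hU⟩ ↔ ∀ i, t.1 i ∈ U := by
      intro t
      have hle : span F (Set.range t.1) ≤ U ↔ ∀ i, t.1 i ∈ U := by
        rw [span_le, Set.range_subset_iff]; rfl
      rw [Subtype.ext_iff, ← hle]
      refine ⟨le_of_eq, fun h => eq_of_le_of_finrank_eq h ?_⟩
      rw [finrank_span_eq_card t.2, Fintype.card_fin, hU]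
    let e : {t // Φ t = ⟨U, hU⟩} ≃ {t : Fin s → U // LinearIndependent F t} :=
      (Equiv.subtypeEquivRight spans).trans <|
        (Equiv.subtypeSubtypeEquivSubtypeInter _ _).trans <|
          (Equiv.subtypeEquivRight fun _ => and_comm).trans <|
            (Equiv.subtypeSubtypeEquivSubtypeInter _ _).symm.trans <|
              Equiv.subtypeEquiv Equiv.subtypePiEquivPi fun t =>
                U.subtype.linearIndependent_iff (v := Equiv.subtypePiEquivPi t) (ker_subtype U)
    rw [Nat.card_congr e, card_linearIndependent hU.ge, hU, prod_range fun i => _ - _]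
  rw [Nat.card_congr (Equiv.sigmaFiberEquiv Φ).symm, Nat.card_sigma,
    sum_congr rfl fun U _ => fiber U, sum_const, card_univ, smul_eq_mul, Nat.card_eq_fintype_card]

theorem natCard_submodule_finrank_eq (s : ℕ) :
    Nat.card {U : Submodule F V // finrank F U = s}
      = gaussBinom (Fintype.card F) (finrank F V) s := by
  set q := Fintype.card F
  rcases lt_or_ge (finrank F V) s with hs | hs
  · rw [gaussBinom_eq_zero_of_lt q hs, Nat.card_eq_zero]
    exact .inl ⟨fun U => (U.2 ▸ U.1.finrank_le).not_gt hs⟩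
  have hq : 1 < q := Fintype.one_lt_card
  have cast_prod : ∀ n, s ≤ n → ((∏ i ∈ range s, (q ^ n - q ^ i) : ℕ) : ℤ)
      = ∏ i ∈ range s, ((q : ℤ) ^ n - q ^ i) := fun n hn => by
    push_cast
    exact prod_congr rfl fun i hi => by
      rw [Nat.cast_sub (Nat.pow_le_pow_right hq.le (by simp at hi; omega))]; push_cast; rfl
  have hpos : ∏ i ∈ range s, ((q : ℤ) ^ s - q ^ i) ≠ 0 :=
    prod_ne_zero_iff.mpr fun i hi => sub_ne_zero.mpr <|
      (pow_right_injective₀ (by positivity) (by exact_mod_cast hq.ne')).ne (by simp at hi; omega)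
  have count := natCard_linearIndependent_eq_mul (F := F) (V := V) s
  rw [card_linearIndependent hs, ← prod_range fun i => q ^ finrank F V - q ^ i] at count
  replace count := congrArg (Nat.cast : ℕ → ℤ) count
  push_cast only [Nat.cast_mul] at count
  rw [cast_prod _ hs, cast_prod _ le_rfl, ← gaussBinom_mul_prod_pow_sub_pow] at count
  exact_mod_cast (mul_right_cancel₀ hpos count).symm

theorem natCard_submodule_finrank_eq_and_le (W : Submodule F V) (s : ℕ) :
    Nat.card {U : Submodule F V // finrank F U = s ∧ U ≤ W}
      = gaussBinom (Fintype.card F) (finrank F W) s := by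
  rw [← natCard_submodule_finrank_eq]
  refine (Nat.card_congr <|
    (Equiv.subtypeEquiv (MapSubtype.orderIso W).toEquiv fun X => ?_).trans <|
      (Equiv.subtypeSubtypeEquivSubtypeInter (· ≤ W) _).trans
        (Equiv.subtypeEquivRight fun _ => and_comm)).symm
  change _ ↔ finrank F (X.map W.subtype) = s
  rw [finrank_map_subtype_eq]

theorem natCard_submodule_finrank_eq_and_ge (T : Submodule F V) {s : ℕ}
    (hs : s ≤ finrank F V) :
    Nat.card {U : Submodule F V // finrank F U = s ∧ T ≤ U}
      = gaussBinom (Fintype.card F) (finrank F V - finrank F T) (finrank F V - s) := by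
  rcases lt_or_ge s (finrank F T) with hTs | hTs
  · rw [gaussBinom_eq_zero_of_lt _ (by have := T.finrank_le; omega), Nat.card_eq_zero]
    exact .inl ⟨fun U => by have := finrank_mono U.2.2; have := U.2.1; omega⟩
  have hquot := finrank_quotient_add_finrank T
  have : Finite (V ⧸ T) := Finite.of_surjective _ T.mkQ_surjective
  rw [show finrank F V - finrank F T = finrank F (V ⧸ T) by omega,
    show finrank F V - s = finrank F (V ⧸ T) - (s - finrank F T) by omega,
    gaussBinom_symm _ (by omega), ← natCard_submodule_finrank_eq]
  refine (Nat.card_congr <|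
    (Equiv.subtypeEquiv (comapMkQRelIso T).toEquiv fun U => ?_).trans <|
      (Equiv.subtypeSubtypeEquivSubtypeInter (· ∈ Set.Ici T) _).trans
        (Equiv.subtypeEquivRight fun _ => and_comm)).symm
  change _ ↔ finrank F (U.comap T.mkQ) = s
  rw [finrank_comap_mkQ]
  omega

end Subspaces

section Matrices

open Module Submodule

variable {F : Type*} [Field F]

lemma Matrix.trace_mul_transpose {ι κ : Type*} [Fintype ι] [Fintype κ] (M N : Matrix ι κ F) :
    trace (M * Nᵀ) = ∑ j, (Nᵀ *ᵥ M.col j) j := by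
  simp only [trace, diag, mul_apply, transpose_apply, mulVec, dotProduct, col_apply]
  rw [sum_comm]
  exact sum_congr rfl fun _ _ => sum_congr rfl fun _ _ => mul_comm _ _

lemma Matrix.range_mulVecLin_le_iff {ι κ : Type*} [Fintype κ] {M : Matrix ι κ F}
    {U : Submodule F (ι → F)} : LinearMap.range M.mulVecLin ≤ U ↔ ∀ j, M.col j ∈ U := by
  rw [range_mulVecLin, span_le, Set.range_subset_iff]
  rfl

variable {k m : ℕ}

lemma Matrix.finrank_ker_mulVecLin_transpose (N : Matrix (Fin k) (Fin m) F) :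
    finrank F (LinearMap.ker Nᵀ.mulVecLin) = k - N.rank := by
  have := LinearMap.finrank_range_add_finrank_ker Nᵀ.mulVecLin
  rw [← Matrix.rank, rank_transpose, finrank_fin_fun] at this
  omega

variable [Fintype F]

open Classical in
theorem card_mul_natCard_ker_range_le (f : Matrix (Fin k) (Fin m) F →ₗ[F] F)
    (N : Matrix (Fin k) (Fin m) F) (hfN : ∀ M, f M = trace (M * Nᵀ))
    (U : Submodule F (Fin k → F)) :
    Fintype.card F
        * Nat.card {M : Matrix (Fin k) (Fin m) F // f M = 0 ∧ LinearMap.range M.mulVecLin ≤ U}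
      = if U ≤ LinearMap.ker Nᵀ.mulVecLin then Fintype.card F ^ (m * finrank F U + 1)
        else Fintype.card F ^ (m * finrank F U) := by
  let ofCols : (Fin m → U) →ₗ[F] Matrix (Fin k) (Fin m) F :=
    { toFun a := of fun i j => (a j : Fin k → F) i
      map_add' _ _ := rfl
      map_smul' _ _ := rfl }
  let g := f ∘ₗ ofCols
  have hg : ∀ a, g a = ∑ j, (Nᵀ *ᵥ (a j : Fin k → F)) j := fun a => by
    simp only [g, LinearMap.comp_apply, hfN, trace_mul_transpose]; rfl
  let e : LinearMap.ker g
      ≃ {M : Matrix (Fin k) (Fin m) F // f M = 0 ∧ LinearMap.range M.mulVecLin ≤ U} :=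
    { toFun a := ⟨ofCols a, a.2, range_mulVecLin_le_iff.mpr fun j => (a.1 j).2⟩
      invFun M := ⟨fun j => ⟨M.1.col j, range_mulVecLin_le_iff.mp M.2.2 j⟩, M.2.1⟩
      left_inv _ := rfl
      right_inv _ := rfl }
  have card_dom : Nat.card (Fin m → U) = Fintype.card F ^ (m * finrank F U) := by
    rw [Nat.card_fun, natCard_eq_pow_finrank (K := F), Nat.card_eq_fintype_card, Nat.card_fin,
      ← pow_mul, mul_comm]
  rw [← Nat.card_congr e]
  split_ifs with hUW
  · have hg0 : g = 0 := LinearMap.ext fun a => by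
      rw [hg]
      exact sum_eq_zero fun j _ => by
        rw [show Nᵀ *ᵥ (a j : Fin k → F) = 0 from hUW (a j).2]; rfl
    rw [hg0, LinearMap.ker_zero, Nat.card_congr topEquiv.toEquiv, card_dom, pow_succ, mul_comm]
  · obtain ⟨x, hxU, hx⟩ := SetLike.not_le_iff_exists.mp hUW
    obtain ⟨j₀, hj₀⟩ := Function.ne_iff.mp hx
    have hg0 : g ≠ 0 := fun h => hj₀ <| by
      have := hg (Pi.single j₀ ⟨x, hxU⟩)
      rwa [h, LinearMap.zero_apply, sum_eq_single j₀ (fun j _ hj => by simp [hj]) (by simp),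
        Pi.single_eq_same, eq_comm] at this
    rw [mul_comm, natCard_ker_mul_card g hg0, card_dom]

attribute [local instance] Fintype.ofFinite

theorem sum_natCard_rank_mul_gaussBinom (p : Matrix (Fin k) (Fin m) F → Prop) {s : ℕ}
    (hs : s ≤ k) :
    ∑ r ∈ range (k + 1),
        Nat.card {M // p M ∧ M.rank = r} * gaussBinom (Fintype.card F) (k - r) (k - s)
      = ∑ U ∈ univ.filter (fun U : Submodule F (Fin k → F) => finrank F U = s),
          Nat.card {M : Matrix (Fin k) (Fin m) F // p M ∧ LinearMap.range M.mulVecLin ≤ U} := by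
  classical
  have hV : finrank F (Fin k → F) = k := finrank_fin_fun F
  have superspaces : ∀ M : Matrix (Fin k) (Fin m) F,
      #{U : Submodule F (Fin k → F) | finrank F U = s ∧ LinearMap.range M.mulVecLin ≤ U}
        = gaussBinom (Fintype.card F) (k - M.rank) (k - s) := by
    intro M
    rw [← Fintype.card_subtype, ← Nat.card_eq_fintype_card,
      natCard_submodule_finrank_eq_and_ge _ (hV.symm ▸ hs), hV]
    rfl
  calc _ = ∑ M ∈ univ.filter p, gaussBinom (Fintype.card F) (k - M.rank) (k - s) := by
        rw [← sum_fiberwise_of_maps_to (g := Matrix.rank) (t := range (k + 1))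
          fun M _ => mem_range.mpr (Nat.lt_succ_of_le M.rank_le_height)]
        refine sum_congr rfl fun r _ => ?_
        rw [sum_congr rfl fun M hM => by rw [(mem_filter.mp hM).2], sum_const, smul_eq_mul,
          filter_filter, Nat.card_eq_fintype_card, Fintype.card_subtype]
    _ = ∑ M ∈ univ.filter p,
          #((univ.filter fun U : Submodule F (Fin k → F) => finrank F U = s).bipartiteAbove
            (fun M U => LinearMap.range M.mulVecLin ≤ U) M) := by
        simp only [← superspaces, bipartiteAbove, filter_filter]
    _ = _ := by
        rw [sum_card_bipartiteAbove_eq_sum_card_bipartiteBelow]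
        refine sum_congr rfl fun U _ => ?_
        rw [bipartiteBelow, filter_filter, Nat.card_eq_fintype_card, Fintype.card_subtype]

theorem card_mul_sum_natCard_ker_rank_mul_gaussBinom (f : Matrix (Fin k) (Fin m) F →ₗ[F] F)
    (N : Matrix (Fin k) (Fin m) F) (hfN : ∀ M, f M = trace (M * Nᵀ)) {s : ℕ} (hs : s ≤ k) :
    (Fintype.card F : ℚ) * ∑ r ∈ range (k + 1),
        (Nat.card {M : Matrix (Fin k) (Fin m) F // f M = 0 ∧ M.rank = r} : ℚ)
          * gaussBinom (Fintype.card F) (k - r) (k - s)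
      = (Fintype.card F : ℚ) ^ (m * s) * (gaussBinom (Fintype.card F) k s
          + ((Fintype.card F : ℚ) - 1) * gaussBinom (Fintype.card F) (k - N.rank) s) := by
  classical
  set q := Fintype.card F
  set W := LinearMap.ker Nᵀ.mulVecLin
  set subspaces := univ.filter fun U : Submodule F (Fin k → F) => finrank F U = s
  have per_subspace : ∀ U ∈ subspaces, (q : ℚ)
      * Nat.card {M : Matrix (Fin k) (Fin m) F // f M = 0 ∧ LinearMap.range M.mulVecLin ≤ U}
        = q ^ (m * s) * (1 + (q - 1) * if U ≤ W then 1 else 0) := by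
    intro U hU
    have h := congrArg (Nat.cast : ℕ → ℚ) (card_mul_natCard_ker_range_le f N hfN U)
    rw [(mem_filter.mp hU).2] at h
    push_cast at h
    rw [h]
    split_ifs <;> ring
  have card_subspaces : (#subspaces : ℚ) = gaussBinom q k s := by
    rw [← Fintype.card_subtype, ← Nat.card_eq_fintype_card, natCard_submodule_finrank_eq,
      finrank_fin_fun]
  have card_subspaces_le :
      (#(subspaces.filter (· ≤ W)) : ℚ) = gaussBinom q (k - N.rank) s := by
    rw [filter_filter, ← Fintype.card_subtype, ← Nat.card_eq_fintype_card,
      natCard_submodule_finrank_eq_and_le, finrank_ker_mulVecLin_transpose]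
  have double_count := congrArg (Nat.cast : ℕ → ℚ)
    (sum_natCard_rank_mul_gaussBinom (m := m) (fun M => f M = 0) hs)
  push_cast at double_count
  rw [← card_subspaces, ← card_subspaces_le, double_count, mul_sum, sum_congr rfl per_subspace,
    ← mul_sum, sum_add_distrib, ← mul_sum, sum_boole, sum_const, nsmul_one]

end Matrices

theorem stmt_18_general {F : Type*} [Field F] [Fintype F]
    (k m : ℕ)
    (f : Matrix (Fin k) (Fin m) F →ₗ[F] F)
    (N : Matrix (Fin k) (Fin m) F)
    (hfN : ∀ M : Matrix (Fin k) (Fin m) F, f M = Matrix.trace (M * Nᵀ))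
    (j : ℕ) (hj : j ≤ k) :
    (Nat.card {M : Matrix (Fin k) (Fin m) F // f M = 0 ∧ M.rank = j} : ℚ)
      = (1 / (Fintype.card F : ℚ))
          * ∑ s ∈ Finset.range (k + 1),
              (-1 : ℚ) ^ (j - s)
                * (Fintype.card F : ℚ) ^ (m * s + (j - s).choose 2)
                * (gaussBinom (Fintype.card F) (k - s) (k - j) : ℚ)
                * ((gaussBinom (Fintype.card F) k s : ℚ)
                    + ((Fintype.card F : ℚ) - 1)
                        * (gaussBinom (Fintype.card F) (k - N.rank) s : ℚ)) := by
  set q := Fintype.card F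
  have hq : (q : ℚ) ≠ 0 := Nat.cast_ne_zero.mpr Fintype.card_ne_zero
  refine (gaussBinom_inversion q k
    (fun r => (Nat.card {M : Matrix (Fin k) (Fin m) F // f M = 0 ∧ M.rank = r} : ℚ))
    (fun s => (q : ℚ) ^ (m * s) * (gaussBinom q k s + (q - 1) * gaussBinom q (k - N.rank) s) / q)
    (fun s hs => ?_) hj).trans ?_
  · rw [← card_mul_sum_natCard_ker_rank_mul_gaussBinom f N hfN hs, mul_div_cancel_left₀ _ hq]
  · rw [mul_sum]
    exact sum_congr rfl fun s _ => by ring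

/-- Let `F` be a finite field with `q` elements, `f : Mat → F` a non-zero linear map
on `k × m` matrices, given by `f(M) = Tr(M Nᵗ)` for a (unique) non-zero matrix `N`
(so that `R_f = rk(N)` is the rank of any generator of `ker(f)^⊥`). Then for every
`0 ≤ j ≤ k` the number of matrices of rank `j` in `ker(f)` equals
`(1/q) Σ_{s=0}^k (−1)^{j−s} q^{ms + C(j−s,2)} [k−s, k−j]_q ([k, s]_q + (q−1)[k−R_f, s]_q)`. -/
theorem stmt_18 {F : Type*} [Field F] [Fintype F]
    (k m : ℕ) (hk : 1 ≤ k) (hkm : k ≤ m)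
    (f : Matrix (Fin k) (Fin m) F →ₗ[F] F) (hf : f ≠ 0)
    (N : Matrix (Fin k) (Fin m) F) (hN : N ≠ 0)
    (hfN : ∀ M : Matrix (Fin k) (Fin m) F, f M = Matrix.trace (M * Nᵀ))
    (j : ℕ) (hj : j ≤ k) :
    (Nat.card {M : Matrix (Fin k) (Fin m) F // f M = 0 ∧ M.rank = j} : ℚ)
      = (1 / (Fintype.card F : ℚ))
          * ∑ s ∈ Finset.range (k + 1),
              (-1 : ℚ) ^ (j - s)
                * (Fintype.card F : ℚ) ^ (m * s + (j - s).choose 2)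
                * (gaussBinom (Fintype.card F) (k - s) (k - j) : ℚ)
                * ((gaussBinom (Fintype.card F) k s : ℚ)
                    + ((Fintype.card F : ℚ) - 1)
                        * (gaussBinom (Fintype.card F) (k - N.rank) s : ℚ)) :=
  stmt_18_general k m f N hfN j hj
end
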